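/- Let p be a prime and R a commutative ring of characteristic p whose Frobenius endomorphism x ↦ x^p is injective. For n ≥ 1 set I_n = {a ∈ ℤR : φ^{n−1}(a) ∈ I^n}. Then the kernel of the ring homomorphism α_n = truncate_n ∘ α : ℤR → W_n R is exactly I_n; equivalently α induces an injective ring homomorphism β_n : ℤR/I_n → W_n R. -/

import Mathlib

noncomputable section

/-- The canonical projection `ℤR → R` from the monoid algebra of the
multiplicative monoid of `R`, sending `[r]` to `r`. -/
def piHom (R : Type*) [CommRing R] : MonoidAlgebra ℤ R →+* R :=
  (MonoidAlgebra.lift ℤ R R (MonoidHom.id R)).toRingHom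

/-- `I = ker (ℤR → R)`. -/
def Iideal (R : Type*) [CommRing R] : Ideal (MonoidAlgebra ℤ R) :=
  RingHom.ker (piHom R)

/-- The ring homomorphism `α : ℤR → 𝕎 R` with `α [r] = ⟨r⟩` (Teichmüller). -/
def alphaHom (p : ℕ) [Fact p.Prime] (R : Type*) [CommRing R] :
    MonoidAlgebra ℤ R →+* WittVector p R :=
  (MonoidAlgebra.lift ℤ (WittVector p R) R (WittVector.teichmuller p)).toRingHom

/-- The lifted Frobenius `φ : ℤR → ℤR`, `φ [r] = [r^p]`. -/
def phiZR (p : ℕ) (R : Type*) [CommRing R] :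
    MonoidAlgebra ℤ R →+* MonoidAlgebra ℤ R :=
  (MonoidAlgebra.lift ℤ (MonoidAlgebra ℤ R) R
    ((MonoidAlgebra.of ℤ R).comp (powMonoidHom p))).toRingHom

/-- The `k`-fold iterate `φ^k` of the lifted Frobenius, as a ring map. -/
def phiPow (p : ℕ) (R : Type*) [CommRing R] :
    ℕ → (MonoidAlgebra ℤ R →+* MonoidAlgebra ℤ R)
  | 0 => RingHom.id _
  | k + 1 => (phiZR p R).comp (phiPow p R k)

/-- The ideal `I_n = {a ∈ ℤR : φ^{n-1}(a) ∈ I^n}`. -/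
def In (p : ℕ) (R : Type*) [CommRing R] (n : ℕ) : Ideal (MonoidAlgebra ℤ R) :=
  ((Iideal R) ^ n).comap (phiPow p R (n - 1))


/-!
Write `V n` for `ker (truncate n)`, the Witt vectors whose first `n` coefficients vanish.
In characteristic `p` we have `V a * V b ⊆ V (a + b)`, and `α` maps `I` into `V 1`, so
`α (I ^ n) ⊆ V n`. Moreover `α ∘ φ = F ∘ α`, and `F` raises every coefficient to the
`p`-th power, which is injective on `R`; hence `F^[k] x ∈ V n ↔ x ∈ V n`, which gives
`I_n ⊆ ker α_n`.

For the converse, induct on `n`. Since `φ b ≡ b ^ p` modulo `p`, we get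
`φ (I ^ n) ⊆ (p ^ n) + I ^ (n + 1)`. So for `b = φ^[n-1] a ∈ I ^ n` we can write
`φ b = p ^ n * c + i` with `i ∈ I ^ (n + 1)`. If `α a ∈ V (n + 1)`, applying `α` gives
`p ^ n * α c ∈ V (n + 1)`. The `n`-th coefficient of `p ^ n * α c` is `π c ^ p ^ n`, so
`π c = 0`, and therefore `φ^[n] a ∈ I ^ (n + 1)`.
-/

open WittVector

theorem MonoidAlgebra.intRingHom_ext {M S : Type*} [Monoid M] [Ring S]
    {f g : MonoidAlgebra ℤ M →+* S}
    (h : ∀ m, f (MonoidAlgebra.of ℤ M m) = g (MonoidAlgebra.of ℤ M m)) : f = g :=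
  MonoidAlgebra.ringHom_ext' (RingHom.ext_int _ _) (MonoidHom.ext h)

theorem eq_zero_of_pow_pow_eq_zero {M : Type*} [MonoidWithZero M] {p : ℕ} (hp : p ≠ 0)
    (hFrob : Function.Injective fun x : M => x ^ p) {x : M} (k : ℕ) (h : x ^ p ^ k = 0) :
    x = 0 := by
  have hinj := hFrob.iterate k
  rw [pow_iterate] at hinj
  exact hinj (by simp only [h, zero_pow (pow_ne_zero k hp)])

theorem Ideal.span_singleton_sup_sq_pow_le {A : Type*} [CommRing A] {I : Ideal A} {x : A}
    (hx : x ∈ I) (k : ℕ) : (span {x} ⊔ I ^ 2) ^ k ≤ span {x ^ k} ⊔ I ^ (k + 1) := by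
  induction k with
  | zero => simp
  | succ k ih =>
    have hxk : span {x ^ k} ≤ I ^ k := (span_singleton_le_iff_mem _).2 (pow_mem_pow hx k)
    have hx1 : span {x} ≤ I := (span_singleton_le_iff_mem _).2 hx
    rw [pow_succ]
    refine (mul_mono_left ih).trans ?_
    rw [sup_mul, mul_sup, mul_sup]
    refine sup_le (sup_le ?_ ?_) (sup_le ?_ ?_)
    · rw [span_singleton_mul_span_singleton, ← pow_succ]
      exact le_sup_left
    · refine le_sup_of_le_right ((mul_mono_left hxk).trans ?_)
      rw [← pow_add]
    · exact le_sup_of_le_right ((mul_mono_right hx1).trans (pow_succ I (k + 1)).ge)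
    · refine le_sup_of_le_right ?_
      rw [← pow_add]
      exact pow_le_pow_right (by omega)

theorem MonoidAlgebra.natCast_mem_nonunits {M : Type*} [Monoid M] (n : ℕ) (hn : n ≠ 1) :
    (n : MonoidAlgebra ℤ M) ∈ nonunits _ := fun hunit => by
  have := hunit.map (MonoidAlgebra.lift ℤ ℤ M 1)
  rw [map_natCast, Int.isUnit_iff] at this
  omega

section MonoidAlgebra

variable {p : ℕ} {R : Type*} [CommRing R]

@[simp]
theorem piHom_of (r : R) : piHom R (MonoidAlgebra.of ℤ R r) = r := by
  simp [piHom]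

@[simp]
theorem phiZR_of (r : R) :
    phiZR p R (MonoidAlgebra.of ℤ R r) = MonoidAlgebra.of ℤ R (r ^ p) := by
  simp [phiZR]

theorem natCast_mem_Iideal [CharP R p] : (p : MonoidAlgebra ℤ R) ∈ Iideal R := by
  simp [Iideal]

theorem phiZR_sub_pow_mem_span [Fact p.Prime] (b : MonoidAlgebra ℤ R) :
    phiZR p R b - b ^ p ∈ Ideal.span {(p : MonoidAlgebra ℤ R)} := by
  have := CharP.quotient (MonoidAlgebra ℤ R) p
    (MonoidAlgebra.natCast_mem_nonunits p (Fact.out : p.Prime).ne_one)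
  have hcomm : (Ideal.Quotient.mk _).comp (phiZR p R) =
      (frobenius _ p).comp (Ideal.Quotient.mk (Ideal.span {(p : MonoidAlgebra ℤ R)})) :=
    MonoidAlgebra.intRingHom_ext fun r => by
      rw [RingHom.comp_apply, RingHom.comp_apply, phiZR_of, map_pow, map_pow, frobenius_def]
  rw [← Ideal.Quotient.eq, ← RingHom.comp_apply, hcomm, RingHom.comp_apply, frobenius_def,
    map_pow]

theorem map_phiZR_Iideal_le [Fact p.Prime] :
    (Iideal R).map (phiZR p R) ≤ Ideal.span {(p : MonoidAlgebra ℤ R)} ⊔ Iideal R ^ 2 := by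
  refine Ideal.map_le_iff_le_comap.2 fun b hb => ?_
  rw [Ideal.mem_comap, ← sub_add_cancel (phiZR p R b) (b ^ p)]
  exact Ideal.add_mem _ (Ideal.mem_sup_left (phiZR_sub_pow_mem_span b))
    (Ideal.mem_sup_right (Ideal.pow_le_pow_right (Fact.out : p.Prime).two_le
      (Ideal.pow_mem_pow hb p)))

theorem map_phiZR_Iideal_pow_le [Fact p.Prime] [CharP R p] (k : ℕ) :
    (Iideal R ^ k).map (phiZR p R) ≤
      Ideal.span {(p : MonoidAlgebra ℤ R) ^ k} ⊔ Iideal R ^ (k + 1) := by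
  rw [Ideal.map_pow]
  exact (Ideal.pow_right_mono map_phiZR_Iideal_le k).trans
    (Ideal.span_singleton_sup_sq_pow_le natCast_mem_Iideal k)

theorem exists_phiZR_sub_mem_Iideal_pow [Fact p.Prime] [CharP R p] {k : ℕ}
    {b : MonoidAlgebra ℤ R} (hb : b ∈ Iideal R ^ k) :
    ∃ c, phiZR p R b - (p : MonoidAlgebra ℤ R) ^ k * c ∈ Iideal R ^ (k + 1) := by
  obtain ⟨y, hy, z, hz, hyz⟩ :=
    Submodule.mem_sup.1 (map_phiZR_Iideal_pow_le k (Ideal.mem_map_of_mem _ hb))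
  obtain ⟨c, rfl⟩ := Ideal.mem_span_singleton'.1 hy
  exact ⟨c, by rwa [← hyz, mul_comm, add_sub_cancel_left]⟩

end MonoidAlgebra

section Witt

variable {p : ℕ} [hp : Fact p.Prime] {R : Type*} [CommRing R]

theorem WittVector.ker_truncate_mul_le [CharP R p] (a b : ℕ) :
    RingHom.ker (truncate (p := p) (R := R) a) * RingHom.ker (truncate b) ≤
      RingHom.ker (truncate (a + b)) := by
  refine Ideal.mul_le.2 fun x hx y hy => ?_
  rw [mem_ker_truncate] at hx hy ⊢
  rw [eq_iterate_verschiebung hx, eq_iterate_verschiebung hy, iterate_verschiebung_mul]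
  exact fun i hi => iterate_verschiebung_coeff_eq_zero _ hi

theorem WittVector.ker_truncate_zero : RingHom.ker (truncate (p := p) (R := R) 0) = ⊤ :=
  eq_top_iff.2 fun _ _ => (mem_ker_truncate _ _).2 fun i hi => absurd hi i.not_lt_zero

theorem WittVector.coeff_mul_natCast_pow [CharP R p] (x : WittVector p R) (k : ℕ) :
    (x * (p : WittVector p R) ^ k).coeff k = x.coeff 0 ^ p ^ k := by
  rw [← iterate_verschiebung_iterate_frobenius, ← iterate_frobenius_coeff]
  simpa using iterate_verschiebung_coeff (frobenius^[k] x) k 0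

@[simp]
theorem alphaHom_of (r : R) :
    alphaHom p R (MonoidAlgebra.of ℤ R r) = teichmuller p r := by
  simp [alphaHom]

theorem constantCoeff_comp_alphaHom :
    (constantCoeff (p := p)).comp (alphaHom p R) = piHom R :=
  MonoidAlgebra.intRingHom_ext fun r => by
    rw [RingHom.comp_apply, alphaHom_of, piHom_of, constantCoeff_apply, teichmuller_coeff_zero]

theorem coeff_zero_alphaHom (a : MonoidAlgebra ℤ R) : (alphaHom p R a).coeff 0 = piHom R a :=
  RingHom.congr_fun constantCoeff_comp_alphaHom a

theorem map_alphaHom_Iideal_pow_le [CharP R p] (n : ℕ) :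
    (Iideal R ^ n).map (alphaHom p R) ≤ RingHom.ker (truncate n) := by
  have hI : (Iideal R).map (alphaHom p R) ≤ RingHom.ker (truncate 1) :=
    Ideal.map_le_iff_le_comap.2 fun a ha => (mem_ker_truncate _ _).2 fun i hi => by
      rw [Nat.lt_one_iff.1 hi, coeff_zero_alphaHom]
      exact ha
  rw [Ideal.map_pow]
  induction n with
  | zero => exact le_top.trans (ker_truncate_zero (p := p) (R := R)).ge
  | succ n ih => exact (Ideal.mul_mono ih hI).trans (ker_truncate_mul_le n 1)

variable [CharP R p]

theorem frobenius_teichmuller (r : R) : frobenius (teichmuller p r) = teichmuller p (r ^ p) := by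
  rw [frobenius_eq_map_frobenius, map_teichmuller, frobenius_def]

theorem alphaHom_phiZR (a : MonoidAlgebra ℤ R) :
    alphaHom p R (phiZR p R a) = frobenius (alphaHom p R a) := by
  have h : (alphaHom p R).comp (phiZR p R) = frobenius.comp (alphaHom p R) :=
    MonoidAlgebra.intRingHom_ext fun r => by
      rw [RingHom.comp_apply, RingHom.comp_apply, phiZR_of, alphaHom_of, alphaHom_of,
        frobenius_teichmuller]
  exact RingHom.congr_fun h a

theorem alphaHom_phiPow (k : ℕ) (a : MonoidAlgebra ℤ R) :
    alphaHom p R (phiPow p R k a) = frobenius^[k] (alphaHom p R a) := by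
  induction k with
  | zero => rfl
  | succ k ih =>
    rw [Function.iterate_succ_apply', ← ih, ← alphaHom_phiZR]
    rfl

theorem WittVector.iterate_frobenius_mem_ker_truncate_iff
    (hFrob : Function.Injective fun x : R => x ^ p) (k n : ℕ) (x : WittVector p R) :
    frobenius^[k] x ∈ RingHom.ker (truncate n) ↔ x ∈ RingHom.ker (truncate n) := by
  simp only [mem_ker_truncate, iterate_frobenius_coeff]
  exact forall₂_congr fun i _ =>
    ⟨eq_zero_of_pow_pow_eq_zero hp.out.ne_zero hFrob k, fun h => by simp [h, hp.out.ne_zero]⟩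

end Witt

section Kernel

variable {p : ℕ} [hp : Fact p.Prime] {R : Type*} [CommRing R] [CharP R p]

theorem mem_Iideal_of_alphaHom_natCast_pow_mul_mem
    (hFrob : Function.Injective fun x : R => x ^ p) {c : MonoidAlgebra ℤ R} (k : ℕ)
    (h : alphaHom p R ((p : MonoidAlgebra ℤ R) ^ k * c) ∈ RingHom.ker (truncate (k + 1))) :
    c ∈ Iideal R := by
  rw [map_mul, map_pow, map_natCast, mul_comm, mem_ker_truncate] at h
  have hk := h k k.lt_succ_self
  rw [coeff_mul_natCast_pow, coeff_zero_alphaHom] at hk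
  exact eq_zero_of_pow_pow_eq_zero hp.out.ne_zero hFrob k hk

theorem phiPow_mem_Iideal_pow_of_alphaHom_mem (hFrob : Function.Injective fun x : R => x ^ p)
    (m : ℕ) {a : MonoidAlgebra ℤ R} (ha : alphaHom p R a ∈ RingHom.ker (truncate (m + 1))) :
    phiPow p R m a ∈ Iideal R ^ (m + 1) := by
  induction m with
  | zero =>
    rw [mem_ker_truncate] at ha
    have h0 := ha 0 Nat.one_pos
    rw [coeff_zero_alphaHom] at h0
    rw [zero_add, pow_one]
    exact h0
  | succ m ih =>
    have hb := ih ((mem_ker_truncate _ _).2 fun i hi => (mem_ker_truncate _ _).1 ha i (by omega))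
    obtain ⟨c, hc⟩ := exists_phiZR_sub_mem_Iideal_pow (p := p) hb
    set pc := (p : MonoidAlgebra ℤ R) ^ (m + 1) * c
    have hphi : phiPow p R (m + 1) a = phiZR p R (phiPow p R m a) := rfl
    have hpc : alphaHom p R pc ∈ RingHom.ker (truncate (m + 2)) := by
      have h1 : alphaHom p R (phiPow p R (m + 1) a) ∈ RingHom.ker (truncate (m + 2)) := by
        rwa [alphaHom_phiPow, iterate_frobenius_mem_ker_truncate_iff hFrob]
      have h2 := map_alphaHom_Iideal_pow_le (p := p) (m + 2) (Ideal.mem_map_of_mem _ hc)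
      rw [← hphi] at h2
      simpa [map_sub] using Ideal.sub_mem _ h1 h2
    have hcI := mem_Iideal_of_alphaHom_natCast_pow_mul_mem hFrob (m + 1) hpc
    rw [hphi, ← sub_add_cancel (phiZR p R _) pc]
    refine Ideal.add_mem _ hc ?_
    rw [pow_succ]
    exact Ideal.mul_mem_mul (Ideal.pow_mem_pow natCast_mem_Iideal _) hcI

theorem alphaHom_mem_of_phiPow_mem (hFrob : Function.Injective fun x : R => x ^ p)
    (m : ℕ) {a : MonoidAlgebra ℤ R} (ha : phiPow p R m a ∈ Iideal R ^ (m + 1)) :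
    alphaHom p R a ∈ RingHom.ker (truncate (m + 1)) := by
  rw [← iterate_frobenius_mem_ker_truncate_iff hFrob m, ← alphaHom_phiPow]
  exact map_alphaHom_Iideal_pow_le (m + 1) (Ideal.mem_map_of_mem _ ha)

theorem ker_truncate_comp_alphaHom (hFrob : Function.Injective fun x : R => x ^ p) (n : ℕ) :
    RingHom.ker ((truncate n).comp (alphaHom p R)) = In p R n := by
  ext a
  rw [RingHom.mem_ker, RingHom.comp_apply, ← RingHom.mem_ker, In, Ideal.mem_comap]
  cases n with
  | zero => simp [ker_truncate_zero]
  | succ m =>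
    exact ⟨phiPow_mem_Iideal_pow_of_alphaHom_mem hFrob m, alphaHom_mem_of_phiPow_mem hFrob m⟩

end Kernel

theorem statement15_general (p : ℕ) [Fact p.Prime] (R : Type*) [CommRing R] [CharP R p]
    (hFrob : Function.Injective fun x : R => x ^ p) (n : ℕ) :
    RingHom.ker ((WittVector.truncate n).comp (alphaHom p R)) = In p R n ∧
    ∃ β : (MonoidAlgebra ℤ R ⧸ In p R n) →+* TruncatedWittVector p n R,
      Function.Injective β ∧
      ∀ a : MonoidAlgebra ℤ R,
        β (Ideal.Quotient.mk (In p R n) a) =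
          WittVector.truncate n (alphaHom p R a) := by
  have hker := ker_truncate_comp_alphaHom hFrob n
  have hvanish : ∀ a ∈ In p R n, (truncate n).comp (alphaHom p R) a = 0 := fun a ha =>
    (hker ▸ ha : a ∈ RingHom.ker _)
  exact ⟨hker, Ideal.Quotient.lift _ _ hvanish,
    RingHom.lift_injective_of_ker_le_ideal _ hvanish hker.le,
    fun a => Ideal.Quotient.lift_mk _ _ _⟩

/-- Let `p` be prime and `R` a commutative ring of characteristic `p` with
injective Frobenius.  Then the kernel of `α_n = truncate_n ∘ α : ℤR → W_n R`
is exactly `I_n`; equivalently `α` induces an injective ring homomorphism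
`β_n : ℤR/I_n → W_n R`. -/
theorem statement15 (p : ℕ) [Fact p.Prime] (R : Type*) [CommRing R] [CharP R p]
    (hFrob : Function.Injective fun x : R => x ^ p) (n : ℕ) (hn : 1 ≤ n) :
    RingHom.ker ((WittVector.truncate n).comp (alphaHom p R)) = In p R n ∧
    ∃ β : (MonoidAlgebra ℤ R ⧸ In p R n) →+* TruncatedWittVector p n R,
      Function.Injective β ∧
      ∀ a : MonoidAlgebra ℤ R,
        β (Ideal.Quotient.mk (In p R n) a) =
          WittVector.truncate n (alphaHom p R a) :=
  statement15_general p R hFrob n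

end
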